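/- arXiv:2006.10150 — 2 statements merged into one kernel-verified Lean document; each statement's English description precedes it below -/
import Mathlib

section
/- Let v, w ∈ ℝⁿ with sup norms bounded by π/(8√n · r) for some r > 0 (n ≥ 2). Suppose that for every unit coordinate direction eₖ and every small ε > 0 one has cos(2ε⟪eₖ, v⟫) = cos(2ε⟪eₖ, w⟫), and similarly cos(2ε⟪eₖ + e_l, v⟫) = cos(2ε⟪eₖ + e_l, w⟫) for all k ≠ l. Then v = w or v = −w. -/
open scoped RealInnerProductSpace

/-- For small `ε` both `2ε|a|` and `2ε|b|` lie in `[0, π]`, where `cos` is injective. -/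
theorem abs_eq_abs_of_cos_two_mul_eq {a b : ℝ}
    (h : ∃ ε₀ > 0, ∀ ε : ℝ, 0 < ε → ε < ε₀ → Real.cos (2 * ε * a) = Real.cos (2 * ε * b)) :
    |a| = |b| := by
  obtain ⟨ε₀, hε₀, h⟩ := h
  set M := |a| + |b| + 1
  have hM : 0 < M := by positivity
  set ε := min (ε₀ / 2) (1 / (2 * M))
  have hε : 0 < ε := lt_min (half_pos hε₀) (by positivity)
  have hεM : 2 * ε * M ≤ 1 := by
    have : ε ≤ 1 / (2 * M) := min_le_right _ _
    rw [le_div_iff₀ (by positivity)] at this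
    linarith
  have hmem : ∀ x : ℝ, |x| ≤ M → 2 * ε * |x| ∈ Set.Icc 0 Real.pi := fun x hx =>
    ⟨by positivity, by nlinarith [Real.pi_gt_three]⟩
  have hcos_abs : ∀ x : ℝ, Real.cos (2 * ε * |x|) = Real.cos (2 * ε * x) := fun x => by
    rw [← Real.cos_abs (2 * ε * x), abs_mul, abs_of_pos (by positivity : (0 : ℝ) < 2 * ε)]
  have heq : 2 * ε * |a| = 2 * ε * |b| :=
    Real.injOn_cos (hmem a (by simp only [M]; linarith [abs_nonneg b]))
      (hmem b (by simp only [M]; linarith [abs_nonneg a])) <| by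
      rw [hcos_abs, hcos_abs]
      exact h ε hε (lt_of_le_of_lt (min_le_left _ _) (half_lt_self hε₀))
  exact mul_left_cancel₀ (by positivity) heq

/-- If `v ≠ ±w`, some coordinate has `v k = -w k ≠ 0` and another has `v l = w l ≠ 0`;
then `|v k + v l| = |w l - w k| ≠ |w k + w l|`. -/
theorem eq_or_eq_neg_of_abs_eq_of_abs_add_eq {ι R : Type*} [Field R] [LinearOrder R]
    [IsStrictOrderedRing R] {v w : ι → R}
    (habs : ∀ k, |v k| = |w k|) (habs_add : ∀ k l, k ≠ l → |v k + v l| = |w k + w l|) :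
    v = w ∨ v = -w := by
  by_contra! hne
  obtain ⟨k, hk⟩ := Function.ne_iff.mp hne.1
  obtain ⟨l, hl⟩ := Function.ne_iff.mp hne.2
  have hvk : v k = -w k := (abs_eq_abs.mp (habs k)).resolve_left hk
  have hvl : v l = w l := (abs_eq_abs.mp (habs l)).resolve_right hl
  have hwk : w k ≠ 0 := fun h => hk (by rw [hvk, h, neg_zero])
  have hwl : w l ≠ 0 := fun h => hl (by simp [hvl, h])
  have hkl : k ≠ l := by
    rintro rfl
    exact hwk (by linarith)
  have hsq := congrArg (· ^ 2) (habs_add k l hkl)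
  simp only [sq_abs, hvk, hvl] at hsq
  exact mul_ne_zero hwk hwl (by linear_combination -hsq / 4)

theorem stmt_8_general (n : ℕ)
    (v w : EuclideanSpace ℝ (Fin n))
    (hcoord : ∀ k : Fin n, ∃ ε₀ > 0, ∀ ε : ℝ, 0 < ε → ε < ε₀ →
      Real.cos (2 * ε * ⟪(EuclideanSpace.single k (1 : ℝ)), v⟫) =
        Real.cos (2 * ε * ⟪(EuclideanSpace.single k (1 : ℝ)), w⟫))
    (hmix : ∀ k l : Fin n, k ≠ l → ∃ ε₀ > 0, ∀ ε : ℝ, 0 < ε → ε < ε₀ →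
      Real.cos (2 * ε * ⟪(EuclideanSpace.single k (1 : ℝ) +
          EuclideanSpace.single l (1 : ℝ)), v⟫) =
        Real.cos (2 * ε * ⟪(EuclideanSpace.single k (1 : ℝ) +
          EuclideanSpace.single l (1 : ℝ)), w⟫)) :
    v = w ∨ v = -w := by
  have hinner (k : Fin n) (u : EuclideanSpace ℝ (Fin n)) :
      ⟪EuclideanSpace.single k (1 : ℝ), u⟫ = u k := by
    simp [EuclideanSpace.inner_single_left]
  have habs (k : Fin n) : |v k| = |w k| := by
    simpa only [hinner] using abs_eq_abs_of_cos_two_mul_eq (hcoord k)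
  have habs_add (k l : Fin n) (hkl : k ≠ l) : |v k + v l| = |w k + w l| := by
    simpa only [inner_add_left, hinner] using abs_eq_abs_of_cos_two_mul_eq (hmix k l hkl)
  rcases eq_or_eq_neg_of_abs_eq_of_abs_add_eq habs habs_add with h | h
  · exact Or.inl (PiLp.ext (congrFun h))
  · exact Or.inr (PiLp.ext (congrFun h))

/-- Equality of cosines along coordinate and mixed directions for all small `ε`
determines a vector up to a global sign. -/
theorem stmt_8 (n : ℕ) (hn : 2 ≤ n) (r : ℝ) (hr : 0 < r)
    (v w : EuclideanSpace ℝ (Fin n))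
    (hv : ∀ k : Fin n, |v k| ≤ Real.pi / (8 * Real.sqrt n * r))
    (hw : ∀ k : Fin n, |w k| ≤ Real.pi / (8 * Real.sqrt n * r))
    (hcoord : ∀ k : Fin n, ∃ ε₀ > 0, ∀ ε : ℝ, 0 < ε → ε < ε₀ →
      Real.cos (2 * ε * ⟪(EuclideanSpace.single k (1 : ℝ)), v⟫) =
        Real.cos (2 * ε * ⟪(EuclideanSpace.single k (1 : ℝ)), w⟫))
    (hmix : ∀ k l : Fin n, k ≠ l → ∃ ε₀ > 0, ∀ ε : ℝ, 0 < ε → ε < ε₀ →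
      Real.cos (2 * ε * ⟪(EuclideanSpace.single k (1 : ℝ) +
          EuclideanSpace.single l (1 : ℝ)), v⟫) =
        Real.cos (2 * ε * ⟪(EuclideanSpace.single k (1 : ℝ) +
          EuclideanSpace.single l (1 : ℝ)), w⟫)) :
    v = w ∨ v = -w :=
  stmt_8_general n v w hcoord hmix
end

section
/- Let A₁, A₂ : ℝⁿ → ℝⁿ be continuous on an open set Ω ⊂ ℝⁿ with ‖A_j‖_∞ ≤ π/(8√n·r), Ω ⊂ B_r(0), n ≥ 2. If cos((x−y)·A₁((x+y)/2)) = cos((x−y)·A₂((x+y)/2)) for all x, y ∈ Ω with x ≠ y, then for every x₀ ∈ Ω either A₁(x₀) = A₂(x₀) or A₁(x₀) = −A₂(x₀). -/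
/-!
Fix `x₀ ∈ Ω` and a direction `v`. The points `x₀ ± ε v` lie in `Ω` for small `ε > 0` and have
midpoint `x₀`, so the hypothesis gives `cos (2ε ⟪v, A₁ x₀⟫) = cos (2ε ⟪v, A₂ x₀⟫)`. For `ε` small
both arguments lie in `[-π, π]`, where the cosine determines the absolute value, hence
`|⟪v, A₁ x₀⟫| = |⟪v, A₂ x₀⟫|` for every `v`. Squaring, `⟪v, a - b⟫ ⟪v, a + b⟫ = 0` for all `v`,
and a product of two linear functionals vanishes identically only if one factor does.
-/

open scoped RealInnerProductSpace
open Filter Topology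

lemma abs_eq_abs_of_cos_eq {s t : ℝ} (hs : |s| ≤ Real.pi) (ht : |t| ≤ Real.pi)
    (h : Real.cos s = Real.cos t) : |s| = |t| :=
  Real.injOn_cos ⟨abs_nonneg s, hs⟩ ⟨abs_nonneg t, ht⟩ (by rwa [Real.cos_abs, Real.cos_abs])

section InnerProductSpace

variable {E : Type*} [NormedAddCommGroup E] [InnerProductSpace ℝ E]

lemma eq_zero_or_eq_zero_of_forall_inner_mul_inner_eq_zero {u w : E}
    (h : ∀ v : E, ⟪v, u⟫ * ⟪v, w⟫ = 0) : u = 0 ∨ w = 0 := by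
  by_contra! hne
  obtain ⟨hu, hw⟩ := hne
  have huu : ⟪u, u⟫ ≠ 0 := inner_self_ne_zero.mpr hu
  have hww : ⟪w, w⟫ ≠ 0 := inner_self_ne_zero.mpr hw
  have huw : ⟪u, w⟫ = 0 := (mul_eq_zero.mp (h u)).resolve_left huu
  have hsum := h (u + w)
  rw [inner_add_left, inner_add_left, huw, real_inner_comm u w, huw] at hsum
  simp_all

lemma eq_or_eq_neg_of_forall_abs_inner_eq {a b : E} (h : ∀ v : E, |⟪v, a⟫| = |⟪v, b⟫|) :
    a = b ∨ a = -b := by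
  have hprod : ∀ v : E, ⟪v, a - b⟫ * ⟪v, a + b⟫ = 0 := fun v => by
    rw [inner_sub_right, inner_add_right, mul_comm, ← sq_sub_sq, ← sq_abs ⟪v, a⟫, h v, sq_abs,
      sub_self]
  rcases eq_zero_or_eq_zero_of_forall_inner_mul_inner_eq_zero hprod with hab | hab
  · exact Or.inl (sub_eq_zero.mp hab)
  · exact Or.inr (eq_neg_of_add_eq_zero_left hab)

lemma abs_inner_eq_of_cos_inner_midpoint_eq {Ω : Set E} {x₀ : E} (hΩ : Ω ∈ 𝓝 x₀)
    {A₁ A₂ : E → E}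
    (h : ∀ x ∈ Ω, ∀ y ∈ Ω, x ≠ y →
      Real.cos ⟪x - y, A₁ ((2 : ℝ)⁻¹ • (x + y))⟫ =
        Real.cos ⟪x - y, A₂ ((2 : ℝ)⁻¹ • (x + y))⟫)
    (v : E) : |⟪v, A₁ x₀⟫| = |⟪v, A₂ x₀⟫| := by
  rcases eq_or_ne v 0 with rfl | hv
  · simp
  have small : ∀ c : ℝ, ∀ᶠ ε in 𝓝 (0 : ℝ), |2 * ε * c| < Real.pi := fun c =>
    ContinuousAt.eventually_lt (by fun_prop) continuousAt_const (by simpa using Real.pi_pos)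
  have near : ∀ s : ℝ, ∀ᶠ ε in 𝓝 (0 : ℝ), x₀ + (s * ε) • v ∈ Ω := fun s =>
    (Continuous.tendsto' (by fun_prop) 0 x₀ (by simp)).eventually hΩ
  obtain ⟨ε, ⟨⟨⟨hx, hy⟩, h₁⟩, h₂⟩, hε_pos⟩ :=
    ((((near 1).and (near (-1))).and (small ⟪v, A₁ x₀⟫)).and (small ⟪v, A₂ x₀⟫)
      |>.filter_mono nhdsWithin_le_nhds |>.and self_mem_nhdsWithin).exists (f := 𝓝[>] 0)
  have hε : (0 : ℝ) < 2 * ε := mul_pos two_pos hε_pos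
  have hdiff : x₀ + (1 * ε) • v - (x₀ + (-1 * ε) • v) = (2 * ε) • v := by module
  have hmid : (2 : ℝ)⁻¹ • (x₀ + (1 * ε) • v + (x₀ + (-1 * ε) • v)) = x₀ := by module
  have hxy : x₀ + (1 * ε) • v ≠ x₀ + (-1 * ε) • v := fun heq =>
    (smul_eq_zero.mp ((sub_eq_zero.mpr heq).symm.trans hdiff).symm).elim hε.ne' hv
  have hcos := h _ hx _ hy hxy
  rw [hdiff, hmid, real_inner_smul_left, real_inner_smul_left] at hcos
  have habs := abs_eq_abs_of_cos_eq (by simpa [mul_assoc] using h₁.le)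
    (by simpa [mul_assoc] using h₂.le) hcos
  rwa [abs_mul (2 * ε), abs_mul (2 * ε), abs_of_pos hε, mul_right_inj' hε.ne'] at habs

end InnerProductSpace

theorem stmt_10_general (n : ℕ)
    (Ω : Set (EuclideanSpace ℝ (Fin n))) (hΩo : IsOpen Ω)
    (A₁ A₂ : EuclideanSpace ℝ (Fin n) → EuclideanSpace ℝ (Fin n))
    (h : ∀ x ∈ Ω, ∀ y ∈ Ω, x ≠ y →
      Real.cos ⟪x - y, A₁ ((2 : ℝ)⁻¹ • (x + y))⟫ =
        Real.cos ⟪x - y, A₂ ((2 : ℝ)⁻¹ • (x + y))⟫) :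
    ∀ x₀ ∈ Ω, A₁ x₀ = A₂ x₀ ∨ A₁ x₀ = -A₂ x₀ := fun _ hx₀ =>
  eq_or_eq_neg_of_forall_abs_inner_eq
    (abs_inner_eq_of_cos_inner_midpoint_eq (hΩo.mem_nhds hx₀) h)

/-- Equality of the cosine kernels on `Ω × Ω` determines the magnetic potential
pointwise up to a sign. -/
theorem stmt_10 (n : ℕ) (hn : 2 ≤ n) (r : ℝ) (hr : 0 < r)
    (Ω : Set (EuclideanSpace ℝ (Fin n))) (hΩo : IsOpen Ω)
    (hΩr : Ω ⊆ Metric.ball (0 : EuclideanSpace ℝ (Fin n)) r)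
    (A₁ A₂ : EuclideanSpace ℝ (Fin n) → EuclideanSpace ℝ (Fin n))
    (hA₁c : ContinuousOn A₁ Ω) (hA₂c : ContinuousOn A₂ Ω)
    (hA₁ : ∀ z, ‖A₁ z‖ ≤ Real.pi / (8 * Real.sqrt n * r))
    (hA₂ : ∀ z, ‖A₂ z‖ ≤ Real.pi / (8 * Real.sqrt n * r))
    (h : ∀ x ∈ Ω, ∀ y ∈ Ω, x ≠ y →
      Real.cos ⟪x - y, A₁ ((2 : ℝ)⁻¹ • (x + y))⟫ =
        Real.cos ⟪x - y, A₂ ((2 : ℝ)⁻¹ • (x + y))⟫) :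
    ∀ x₀ ∈ Ω, A₁ x₀ = A₂ x₀ ∨ A₁ x₀ = -A₂ x₀ :=
  stmt_10_general n Ω hΩo A₁ A₂ h
end
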